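/- Let f and g be homotopic (κ,λ)-continuous maps from a digital image (X,κ) to a digital image (Y,λ). Then the induced maps f_*, g_* : (2^X,κ') → (2^Y,λ') defined by f_*(A) = f(A), g_*(A) = g(A) are homotopic, and likewise the induced maps f_*, g_* : K(X,κ') → K(Y,λ') are homotopic. -/

import Mathlib

/-- `a` and `b` are adjacent or equal ("⟷≤") with respect to adjacency relation `α`. -/
def AdjEq {A : Type*} (α : A → A → Prop) (a b : A) : Prop := α a b ∨ a = b

/-- `f : (X,κ) → (Y,lam)` is digitally continuous: adjacency is sent to
adjacency-or-equality. -/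
def DigCont {X Y : Type*} (κ : X → X → Prop) (lam : Y → Y → Prop) (f : X → Y) : Prop :=
  ∀ x x', κ x x' → AdjEq lam (f x) (f x')

/-- Continuity of `f` relative to carrier sets: `f` maps `S` into `T` and sends
`α`-adjacent elements of `S` to `β`-adjacent-or-equal elements. -/
def ContOn {A B : Type*} (α : A → A → Prop) (β : B → B → Prop)
    (S : Set A) (T : Set B) (f : A → B) : Prop :=
  (∀ a ∈ S, f a ∈ T) ∧ ∀ a ∈ S, ∀ a' ∈ S, α a a' → AdjEq β (f a) (f a')

/-- The hyperspace adjacency `κ'`: distinct `A, B` are adjacent iff every point of `A`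
is adjacent-or-equal to some point of `B` and vice versa. -/
def HyperAdj {X : Type*} (κ : X → X → Prop) (A B : Finset X) : Prop :=
  A ≠ B ∧ (∀ a ∈ A, ∃ b ∈ B, AdjEq κ a b) ∧ ∀ b ∈ B, ∃ a ∈ A, AdjEq κ b a

/-- A subset `S` is connected w.r.t. adjacency `α`: any two of its points are joined by
a path (finite sequence of consecutively adjacent-or-equal points) lying in `S`. -/
def ConnIn {A : Type*} (α : A → A → Prop) (S : Set A) : Prop :=
  ∀ a ∈ S, ∀ b ∈ S, ∃ (n : ℕ) (p : ℕ → A), p 0 = a ∧ p n = b ∧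
    (∀ i ≤ n, p i ∈ S) ∧ ∀ i < n, AdjEq α (p i) (p (i + 1))

/-- `a` and `b` are joined by a path lying in `S` (i.e. they are in the same
connected component of the graph induced on `S`). -/
def Chain {A : Type*} (α : A → A → Prop) (S : Set A) (a b : A) : Prop :=
  ∃ (n : ℕ) (p : ℕ → A), p 0 = a ∧ p n = b ∧
    (∀ i ≤ n, p i ∈ S) ∧ ∀ i < n, AdjEq α (p i) (p (i + 1))

/-- The carrier of the hyperspace `2^X`: nonempty finite subsets of `X`. -/
def TwoX (X : Type*) : Set (Finset X) := {A | A.Nonempty}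

/-- The carrier of `K(X,κ')`: nonempty finite κ-connected subsets of `X`. -/
def KSet {X : Type*} (κ : X → X → Prop) : Set (Finset X) :=
  {A | A.Nonempty ∧ ConnIn κ (A : Set X)}

/-- A digital homotopy from `f` to `g`, relative to carriers `S`, `T`:
a function `F : S × [0,m] → T` with `F(·,0) = f`, `F(·,m) = g`, all tracks
`t ↦ F(a,t)` are paths, and all time slices `a ↦ F(a,t)` are continuous. -/
def HtpyOn {A B : Type*} (α : A → A → Prop) (β : B → B → Prop)
    (S : Set A) (T : Set B) (f g : A → B) : Prop :=
  ∃ (m : ℕ) (F : A → ℕ → B),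
    (∀ a ∈ S, ∀ t ≤ m, F a t ∈ T) ∧
    (∀ a ∈ S, F a 0 = f a) ∧ (∀ a ∈ S, F a m = g a) ∧
    (∀ a ∈ S, ∀ t < m, AdjEq β (F a t) (F a (t + 1))) ∧
    (∀ t ≤ m, ∀ a ∈ S, ∀ a' ∈ S, α a a' → AdjEq β (F a t) (F a' t))

/-- A digital homotopy from `f` to `g` in exactly `m` steps (on full types). -/
def HtpyN {X Y : Type*} (κ : X → X → Prop) (lam : Y → Y → Prop)
    (f g : X → Y) (m : ℕ) : Prop :=
  ∃ F : X → ℕ → Y,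
    (∀ x, F x 0 = f x) ∧ (∀ x, F x m = g x) ∧
    (∀ x, ∀ t < m, AdjEq lam (F x t) (F x (t + 1))) ∧
    (∀ t ≤ m, DigCont κ lam fun x => F x t)

/-- `f` and `g` are digitally homotopic. -/
def Htpy {X Y : Type*} (κ : X → X → Prop) (lam : Y → Y → Prop) (f g : X → Y) : Prop :=
  ∃ m, HtpyN κ lam f g m

/-- The graphs on carriers `S` and `T` have the same homotopy type. -/
def HtpyEquivOn {A B : Type*} (α : A → A → Prop) (β : B → B → Prop)
    (S : Set A) (T : Set B) : Prop :=
  ∃ (f : A → B) (g : B → A),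
    ContOn α β S T f ∧ ContOn β α T S g ∧
    HtpyOn α α S S (g ∘ f) id ∧ HtpyOn β β T T (f ∘ g) id

/-- The graph on carrier `S` is contractible: the identity is homotopic to a constant. -/
def ContractibleOn {A : Type*} (α : A → A → Prop) (S : Set A) : Prop :=
  ∃ c ∈ S, HtpyOn α α S S id fun _ => c

/-- `Φ`-adjacency of functions: `f ≠ g` and `f(x) ⟷≤ g(x)` for all `x`. -/
def PhiAdj {X Y : Type*} (lam : Y → Y → Prop) (f g : X → Y) : Prop :=
  f ≠ g ∧ ∀ x, AdjEq lam (f x) (g x)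

/-- `Ψ`-adjacency of functions: `f ≠ g` and `x₀ ⟷≤ x₁` implies `f(x₀) ⟷≤ g(x₁)`. -/
def PsiAdj {X Y : Type*} (κ : X → X → Prop) (lam : Y → Y → Prop) (f g : X → Y) : Prop :=
  f ≠ g ∧ ∀ x₀ x₁, AdjEq κ x₀ x₁ → AdjEq lam (f x₀) (g x₁)

/-- `C` is a connected component of the graph induced on the vertex set `V`:
a maximal connected subset of `V`. -/
def IsComponentIn {A : Type*} (α : A → A → Prop) (V C : Set A) : Prop :=
  C ⊆ V ∧ ConnIn α C ∧ ∀ C' : Set A, C' ⊆ V → ConnIn α C' → C ⊆ C' → C' = C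

/-! Apply the homotopy `F` pointwise: `(A, t) ↦ F(A, t)` is a homotopy between the induced
maps. Its tracks are paths because `F(x, t) ⟷≤ F(x, t + 1)` for every `x ∈ A` (in both
directions, by symmetry of `λ`), and its time slices are continuous because every continuous
map induces a continuous map of hyperspaces. Images of connected sets are connected, so the
same homotopy also works on `K(X,κ')`. -/

lemma AdjEq.symm {A : Type*} {α : A → A → Prop} (hα : ∀ a b, α a b → α b a) {a b : A}
    (h : AdjEq α a b) : AdjEq α b a :=
  h.imp (hα a b) Eq.symm

lemma AdjEq.map {X Y : Type*} {κ : X → X → Prop} {lam : Y → Y → Prop} {u : X → Y}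
    (hu : DigCont κ lam u) {a b : X} (h : AdjEq κ a b) : AdjEq lam (u a) (u b) := by
  rcases h with h | rfl
  · exact hu _ _ h
  · exact Or.inr rfl

lemma adjEq_hyperAdj_image {X Y : Type*} [DecidableEq Y] {lam : Y → Y → Prop}
    {A B : Finset X} {u v : X → Y}
    (hAB : ∀ a ∈ A, ∃ b ∈ B, AdjEq lam (u a) (v b))
    (hBA : ∀ b ∈ B, ∃ a ∈ A, AdjEq lam (v b) (u a)) :
    AdjEq (HyperAdj lam) (A.image u) (B.image v) := by
  by_cases he : A.image u = B.image v
  · exact Or.inr he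
  refine Or.inl ⟨he, ?_, ?_⟩
  · simp only [Finset.mem_image, forall_exists_index, and_imp, forall_apply_eq_imp_iff₂]
    intro a ha
    obtain ⟨b, hb, hab⟩ := hAB a ha
    exact ⟨v b, ⟨b, hb, rfl⟩, hab⟩
  · simp only [Finset.mem_image, forall_exists_index, and_imp, forall_apply_eq_imp_iff₂]
    intro b hb
    obtain ⟨a, ha, hba⟩ := hBA b hb
    exact ⟨u a, ⟨a, ha, rfl⟩, hba⟩

lemma adjEq_hyperAdj_image_of_forall_adjEq {X Y : Type*} [DecidableEq Y]
    {lam : Y → Y → Prop} (hlam : ∀ y y', lam y y' → lam y' y) {u v : X → Y}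
    (huv : ∀ x, AdjEq lam (u x) (v x)) (A : Finset X) :
    AdjEq (HyperAdj lam) (A.image u) (A.image v) :=
  adjEq_hyperAdj_image (fun a ha => ⟨a, ha, huv a⟩) fun a ha => ⟨a, ha, (huv a).symm hlam⟩

lemma DigCont.finsetImage {X Y : Type*} [DecidableEq Y] {κ : X → X → Prop}
    {lam : Y → Y → Prop} {u : X → Y} (hu : DigCont κ lam u) :
    DigCont (HyperAdj κ) (HyperAdj lam) (Finset.image u) := by
  rintro A B ⟨-, hAB, hBA⟩
  refine adjEq_hyperAdj_image (fun a ha => ?_) fun b hb => ?_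
  · obtain ⟨b, hb, hab⟩ := hAB a ha
    exact ⟨b, hb, hab.map hu⟩
  · obtain ⟨a, ha, hba⟩ := hBA b hb
    exact ⟨a, ha, hba.map hu⟩

lemma ConnIn.finsetImage {X Y : Type*} [DecidableEq Y] {κ : X → X → Prop}
    {lam : Y → Y → Prop} {u : X → Y} (hu : DigCont κ lam u) {A : Finset X}
    (hA : ConnIn κ (A : Set X)) : ConnIn lam (A.image u : Set Y) := by
  simp only [ConnIn, Finset.coe_image, Set.mem_image, Finset.mem_coe, forall_exists_index,
    and_imp, forall_apply_eq_imp_iff₂]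
  intro a ha b hb
  obtain ⟨n, p, hp0, hpn, hpA, hpadj⟩ := hA a ha b hb
  exact ⟨n, u ∘ p, by simp [hp0], by simp [hpn], fun i hi => ⟨p i, hpA i hi, rfl⟩,
    fun i hi => (hpadj i hi).map hu⟩

lemma HtpyN.htpyOn_finsetImage {X Y : Type*} [DecidableEq Y] {κ : X → X → Prop}
    {lam : Y → Y → Prop} (hlam : ∀ y y', lam y y' → lam y' y) {f g : X → Y} {m : ℕ}
    (hfg : HtpyN κ lam f g m) {S : Set (Finset X)} {T : Set (Finset Y)}
    (hST : ∀ u : X → Y, DigCont κ lam u → ∀ A ∈ S, A.image u ∈ T) :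
    HtpyOn (HyperAdj κ) (HyperAdj lam) S T (Finset.image f) (Finset.image g) := by
  obtain ⟨F, hF0, hFm, htrack, hslice⟩ := hfg
  refine ⟨m, fun A t => A.image (F · t), fun A hA t ht => hST _ (hslice t ht) A hA,
    fun A _ => ?_, fun A _ => ?_, fun A _ t ht => ?_, fun t ht A _ B _ hAB => ?_⟩
  · simp only [hF0]
  · simp only [hFm]
  · exact adjEq_hyperAdj_image_of_forall_adjEq hlam (fun x => htrack x t ht) A
  · exact (hslice t ht).finsetImage A B hAB

theorem stmt2_general {X Y : Type*} [DecidableEq Y]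
    (κ : X → X → Prop) (lam : Y → Y → Prop)
    (hlsymm : ∀ x y, lam x y → lam y x)
    (f g : X → Y)
    (h : Htpy κ lam f g) :
    HtpyOn (HyperAdj κ) (HyperAdj lam) (TwoX X) (TwoX Y)
      (fun A => A.image f) (fun A => A.image g) ∧
    HtpyOn (HyperAdj κ) (HyperAdj lam) (KSet κ) (KSet lam)
      (fun A => A.image f) (fun A => A.image g) := by
  obtain ⟨m, hm⟩ := h
  exact ⟨hm.htpyOn_finsetImage hlsymm fun u _ A hA => hA.image u,
    hm.htpyOn_finsetImage hlsymm fun u hu A hA => ⟨hA.1.image u, hA.2.finsetImage hu⟩⟩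

/-- if `f` and `g` are homotopic `(κ,lam)`-continuous maps, then the
induced maps `A ↦ f(A)` and `A ↦ g(A)` are homotopic as maps `2^X → 2^Y`, and as maps
`K(X,κ') → K(Y,lam')`. -/
theorem stmt2 {X Y : Type*} [DecidableEq Y]
    (κ : X → X → Prop) (lam : Y → Y → Prop)
    (hκsymm : ∀ x y, κ x y → κ y x) (hκirr : ∀ x, ¬ κ x x)
    (hlsymm : ∀ x y, lam x y → lam y x) (hlirr : ∀ y, ¬ lam y y)
    (f g : X → Y) (hf : DigCont κ lam f) (hg : DigCont κ lam g)
    (h : Htpy κ lam f g) :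
    HtpyOn (HyperAdj κ) (HyperAdj lam) (TwoX X) (TwoX Y)
      (fun A => A.image f) (fun A => A.image g) ∧
    HtpyOn (HyperAdj κ) (HyperAdj lam) (KSet κ) (KSet lam)
      (fun A => A.image f) (fun A => A.image g) :=
  stmt2_general κ lam hlsymm f g h
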